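/- arXiv:2206.07084 — 6 statements merged into one kernel-verified Lean document; each statement's English description precedes it below -/
import Mathlib

section
/- Let π be a finite set of pairwise independent STRIPS actions over L with pre(π) ⊆ s. Then for every action a ∈ π and every subset π' ⊆ π with a ∉ π', the action a is applicable in the state obtained by applying the layer π' to s, i.e. pre(a) ⊆ γ(s, π'). -/
namespace STRIPS

/-- A STRIPS action over a type `L` of logical propositions. -/
structure Action (L : Type*) where
  pre : Set L
  add : Set L
  del : Set L

/-- Applying an action `a` to a state `s`: `γ(s, a) = (s \ del(a)) ∪ add(a)`. -/
def gamma {L : Type*} (s : Set L) (a : Action L) : Set L :=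
  (s \ a.del) ∪ a.add

/-- Two actions are independent iff `del(a) ∩ (pre(b) ∪ add(b)) = ∅`
and `del(b) ∩ (pre(a) ∪ add(a)) = ∅`. -/
def Indep {L : Type*} (a b : Action L) : Prop :=
  a.del ∩ (b.pre ∪ b.add) = ∅ ∧ b.del ∩ (a.pre ∪ a.add) = ∅

/-- `pre(π) = ⋃_{a ∈ π} pre(a)`. -/
def preL {L : Type*} (π : Set (Action L)) : Set L := ⋃ a ∈ π, a.pre

/-- `add(π) = ⋃_{a ∈ π} add(a)`. -/
def addL {L : Type*} (π : Set (Action L)) : Set L := ⋃ a ∈ π, a.add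

/-- `del(π) = ⋃_{a ∈ π} del(a)`. -/
def delL {L : Type*} (π : Set (Action L)) : Set L := ⋃ a ∈ π, a.del

/-- Applying an action layer `π` to a state `s`:
`γ(s, π) = (s \ del(π)) ∪ add(π)`. -/
def gammaL {L : Type*} (s : Set L) (π : Set (Action L)) : Set L :=
  (s \ delL π) ∪ addL π

/-- The actions in `π` are pairwise independent. -/
def PairwiseIndep {L : Type*} (π : Set (Action L)) : Prop :=
  ∀ a ∈ π, ∀ b ∈ π, a ≠ b → Indep a b

/-- Let `π` be a finite set of pairwise independent actions with
`pre(π) ⊆ s`. Then for every `a ∈ π` and every subset `π' ⊆ π` with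
`a ∉ π'`, the action `a` is applicable after applying the layer `π'`
to `s`: `pre(a) ⊆ γ(s, π')`. -/
theorem applicable_after_sublayer {L : Type*} (s : Set L)
    (π : Set (Action L)) (hfin : π.Finite) (hind : PairwiseIndep π)
    (hpre : preL π ⊆ s) (a : Action L) (ha : a ∈ π)
    (π' : Set (Action L)) (hsub : π' ⊆ π) (ha' : a ∉ π') :
    a.pre ⊆ gammaL s π' := by
  intro p hp
  left
  refine ⟨hpre (Set.mem_biUnion ha hp), ?_⟩
  intro hdel
  obtain ⟨b, hb, hpb⟩ := Set.mem_iUnion₂.mp hdel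
  have hne : b ≠ a := fun h => ha' (h ▸ hb)
  have := (hind b (hsub hb) a ha hne).1
  exact Set.eq_empty_iff_forall_notMem.mp this p ⟨hpb, Or.inl hp⟩

end STRIPS
end

section
/- Let π be a finite set of pairwise independent STRIPS actions over L and let a be an action with a ∉ π that is independent of every action in π. Then applying the enlarged layer π ∪ {a} to any state s gives the same state as first applying the layer π and then the action a: γ(s, π ∪ {a}) = γ(γ(s, π), a). -/
namespace STRIPS

/-- Let `π` be a finite set of pairwise independent actions and let `a ∉ π`
be independent of every action in `π`. Then applying the enlarged layer
`π ∪ {a}` to any state `s` equals first applying the layer `π` and then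
the action `a`: `γ(s, π ∪ {a}) = γ(γ(s, π), a)`. -/
theorem gammaL_insert {L : Type*} (π : Set (Action L)) (hfin : π.Finite)
    (hind : PairwiseIndep π) (a : Action L) (ha : a ∉ π)
    (haind : ∀ b ∈ π, Indep a b) (s : Set L) :
    gammaL s (π ∪ {a}) = gamma (gammaL s π) a := by
  have hda : ∀ b ∈ π, ∀ x, x ∈ a.del → x ∉ b.add := by
    intro b hb x hx hxb
    have := (haind b hb).1
    have : x ∈ a.del ∩ (b.pre ∪ b.add) := ⟨hx, Or.inr hxb⟩
    simp_all
  ext x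
  simp only [gammaL, gamma, addL, delL, Set.mem_union, Set.mem_diff,
    Set.mem_iUnion, Set.mem_singleton_iff]
  constructor
  · rintro (⟨hs, hnd⟩ | ⟨b, hb⟩)
    · by_cases hxa : x ∈ a.add
      · exact Or.inr hxa
      · refine Or.inl ⟨Or.inl ⟨hs, ?_⟩, ?_⟩
        · rintro ⟨c, hc, hcx⟩; exact hnd ⟨c, Or.inl hc, hcx⟩
        · intro hxd; exact hnd ⟨a, Or.inr rfl, hxd⟩
    · rcases hb with ⟨hbπ | hba, hxb⟩
      · exact Or.inl ⟨Or.inr ⟨b, hbπ, hxb⟩, fun hxd => hda b hbπ x hxd hxb⟩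
      · subst hba; exact Or.inr hxb
  · rintro (⟨(⟨hs, hnd⟩ | ⟨b, hbπ, hxb⟩), hxa⟩ | hxa)
    · refine Or.inl ⟨hs, ?_⟩
      rintro ⟨c, hc | hc, hcx⟩
      · exact hnd ⟨c, hc, hcx⟩
      · subst hc; exact hxa hcx
    · exact Or.inr ⟨b, Or.inl hbπ, hxb⟩
    · exact Or.inr ⟨a, Or.inr rfl, hxa⟩

end STRIPS
end

section
/- Let l be a list of pairwise independent STRIPS actions over L (each action occurring at most once) and let s be a state with pre(a) ⊆ s for every action a in l. Then the sequential execution of l from s is applicable at every step: for every decomposition l = l₁ ++ (a :: l₂), the action a is applicable in the state obtained by folding γ over l₁ starting from s. -/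
/-! An action never deletes the precondition of another action independent of it, so by
induction along `l₁` the precondition of `a`, present in `s`, survives every action before `a`,
none of which is `a` itself since the actions of `l` are distinct. -/

namespace STRIPS

theorem subset_gamma {L : Type*} {p s : Set L} {b : Action L} (hs : p ⊆ s)
    (hb : Disjoint b.del p) : p ⊆ gamma s b :=
  Set.subset_union_of_subset_left (Set.subset_sdiff.mpr ⟨hs, hb.symm⟩) _

theorem subset_foldl_gamma {L : Type*} {p : Set L} (l : List (Action L))
    (hl : ∀ b ∈ l, Disjoint b.del p) {s : Set L} (hs : p ⊆ s) : p ⊆ l.foldl gamma s := by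
  induction l generalizing s with
  | nil => exact hs
  | cons b l ih =>
    exact ih (fun c hc => hl c (List.mem_cons_of_mem b hc))
      (subset_gamma hs (hl b List.mem_cons_self))

theorem Indep.disjoint_del_pre {L : Type*} {a b : Action L} (h : Indep a b) :
    Disjoint b.del a.pre :=
  Set.disjoint_iff_inter_eq_empty.mpr <|
    Set.subset_eq_empty (Set.inter_subset_inter_right _ Set.subset_union_left) h.2

/-- Let `l` be a list of pairwise independent actions (each occurring at
most once), and let `s` be a state with `pre(a) ⊆ s` for every `a` in `l`.
Then the sequential execution of `l` from `s` is applicable at every step: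
for every decomposition `l = l₁ ++ (a :: l₂)`, the action `a` is applicable
in the state obtained by folding `γ` over `l₁` starting from `s`. -/
theorem seq_exec_applicable {L : Type*} (l : List (Action L))
    (hnodup : l.Nodup)
    (hind : ∀ a ∈ l, ∀ b ∈ l, a ≠ b → Indep a b)
    (s : Set L) (hpre : ∀ a ∈ l, a.pre ⊆ s) :
    ∀ (l₁ : List (Action L)) (a : Action L) (l₂ : List (Action L)),
      l = l₁ ++ a :: l₂ → a.pre ⊆ l₁.foldl gamma s := by
  rintro l₁ a l₂ rfl
  have ha : a ∈ l₁ ++ a :: l₂ := by simp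
  refine subset_foldl_gamma l₁ (fun b hb => ?_) (hpre a ha)
  have hba : b ≠ a := by
    rintro rfl
    exact List.disjoint_of_nodup_append hnodup hb List.mem_cons_self
  exact (hind a ha b (List.mem_append_left _ hb) hba.symm).disjoint_del_pre

end STRIPS
end

section
/- Let π be a finite set of pairwise independent STRIPS actions over L with pre(π) ⊆ s, and let l be any linearization of π (a list enumerating each action of π exactly once, in any order). Then the sequential execution of l from s yields exactly the state produced by the layer application: foldl γ s l = (s \ del(π)) ∪ add(π) = γ(s, π). -/
namespace STRIPS

/-- `l` is a linearization of `π`: a list enumerating each action of `π`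
exactly once. -/
def Linearization {L : Type*} (π : Set (Action L)) (l : List (Action L)) : Prop :=
  l.Nodup ∧ ∀ a, a ∈ l ↔ a ∈ π

/-! Executing `a` and then the layer `π` amounts to applying the layer `insert a π` as soon as
no action of `π` deletes what `a` adds, which independence guarantees; induction on the
linearization does the rest. -/

section

variable {L : Type*}

theorem addL_insert (a : Action L) (π : Set (Action L)) :
    addL (insert a π) = a.add ∪ addL π := by
  simp only [addL, Set.biUnion_insert]

theorem delL_insert (a : Action L) (π : Set (Action L)) :
    delL (insert a π) = a.del ∪ delL π := by
  simp only [delL, Set.biUnion_insert]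

theorem Indep.disjoint_add_del {a b : Action L} (h : Indep a b) : Disjoint a.add b.del := by
  rw [Set.disjoint_iff_inter_eq_empty, Set.inter_comm]
  exact Set.eq_empty_of_subset_empty (h.2 ▸ Set.inter_subset_inter_right _ Set.subset_union_right)

theorem disjoint_add_delL {a : Action L} {π : Set (Action L)} (h : ∀ b ∈ π, Indep a b) :
    Disjoint a.add (delL π) := by
  simp only [delL, Set.disjoint_iUnion_right]
  exact fun b hb => (h b hb).disjoint_add_del

theorem gammaL_gamma (s : Set L) {a : Action L} {π : Set (Action L)}
    (h : Disjoint a.add (delL π)) : gammaL (gamma s a) π = gammaL s (insert a π) := by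
  rw [gammaL, gammaL, gamma, addL_insert, delL_insert, Set.union_sdiff_distrib,
    h.sdiff_eq_left, Set.sdiff_sdiff, Set.union_assoc]

theorem setOf_mem_cons (a : Action L) (l : List (Action L)) :
    {x | x ∈ a :: l} = insert a {x | x ∈ l} := by
  ext x
  simp only [List.mem_cons, Set.mem_ofPred_eq, Set.mem_insert_iff]

theorem foldl_gamma_eq_gammaL (s : Set L) {l : List (Action L)} (hl : l.Pairwise Indep) :
    l.foldl gamma s = gammaL s {a | a ∈ l} := by
  induction l generalizing s with
  | nil => simp [gammaL, addL, delL]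
  | cons a t ih =>
    obtain ⟨ha, ht⟩ := List.pairwise_cons.mp hl
    rw [List.foldl_cons, ih _ ht, gammaL_gamma _ (disjoint_add_delL (π := {x | x ∈ t}) ha),
      setOf_mem_cons]

end

theorem linearization_foldl_eq_gammaL_general {L : Type*} (s : Set L)
    (π : Set (Action L)) (hind : PairwiseIndep π)
    (l : List (Action L)) (hl : Linearization π l) :
    l.foldl gamma s = (s \ delL π) ∪ addL π ∧ l.foldl gamma s = gammaL s π := by
  obtain ⟨hnodup, hmem⟩ := hl
  have hpairwise : l.Pairwise Indep := hnodup.imp_of_mem fun ha hb hab =>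
    hind _ ((hmem _).mp ha) _ ((hmem _).mp hb) hab
  have hπ : {a | a ∈ l} = π := Set.ext hmem
  rw [foldl_gamma_eq_gammaL s hpairwise, hπ]
  exact ⟨rfl, rfl⟩

/-- Let `π` be a finite set of pairwise independent actions with
`pre(π) ⊆ s` and let `l` be any linearization of `π`. Then the sequential
execution of `l` from `s` yields exactly the state produced by the layer
application: `foldl γ s l = (s \ del(π)) ∪ add(π) = γ(s, π)`. -/
theorem linearization_foldl_eq_gammaL {L : Type*} (s : Set L)
    (π : Set (Action L)) (hfin : π.Finite) (hind : PairwiseIndep π)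
    (hpre : preL π ⊆ s) (l : List (Action L)) (hl : Linearization π l) :
    l.foldl gamma s = (s \ delL π) ∪ addL π ∧ l.foldl gamma s = gammaL s π :=
  linearization_foldl_eq_gammaL_general s π hind l hl

end STRIPS
end

section
/- Let l and l' be lists of STRIPS actions over L such that l' is a permutation of l and the actions occurring in l are pairwise independent. Then for every state s, sequential execution of l and of l' from s yield the same final state: foldl γ s l = foldl γ s l'. -/
namespace STRIPS

/-- Let `l'` be a permutation of `l`, where the actions occurring in `l` are
pairwise independent. Then for every state `s`, sequential execution of `l`
and of `l'` from `s` yield the same final state. -/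
theorem foldl_gamma_perm {L : Type*} (l l' : List (Action L))
    (hperm : l'.Perm l)
    (hind : ∀ a ∈ l, ∀ b ∈ l, a ≠ b → Indep a b)
    (s : Set L) : l.foldl gamma s = l'.foldl gamma s := by
  refine (hperm.foldl_eq' ?_ s).symm
  intro a ha b hb z
  rcases eq_or_ne a b with rfl | hne
  · rfl
  obtain ⟨h1, h2⟩ := hind a (hperm.mem_iff.mp ha) b (hperm.mem_iff.mp hb) hne
  have hab : a.del ∩ b.add = ∅ := by
    rw [Set.eq_empty_iff_forall_notMem] at h1 ⊢
    intro x hx; exact h1 x ⟨hx.1, Or.inr hx.2⟩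
  have hba : b.del ∩ a.add = ∅ := by
    rw [Set.eq_empty_iff_forall_notMem] at h2 ⊢
    intro x hx; exact h2 x ⟨hx.1, Or.inr hx.2⟩
  rw [Set.eq_empty_iff_forall_notMem] at hab hba
  simp only [gamma]
  ext x
  have := hab x; have := hba x
  simp only [Set.mem_inter_iff, Set.mem_union, Set.mem_diff] at *
  tauto

end STRIPS
end

section
/- Let Π = ⟨π₁, …, πₙ⟩ be a layered plan over L that is applicable from the initial state I (i.e. pre(πᵢ) is contained in the state obtained by successively applying π₁, …, πᵢ₋₁ to I, for every i), and let G ⊆ L be a goal with G ⊆ γ(I, Π). Then for every choice of linearizations lᵢ of the layers πᵢ, the sequential plan l₁ ++ ⋯ ++ lₙ is a solution of the STRIPS problem: each action is applicable in the state at which it is executed, and the final state obtained by sequential execution from I contains G. -/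
namespace STRIPS

/-- Applying a layered plan `Π = ⟨π₁, …, πₙ⟩` to a state `s`:
`γ(s, Π) = γ(γ(s, π₁), ⟨π₂, …, πₙ⟩)`. -/
def gammaP {L : Type*} (s : Set L) (P : List (Set (Action L))) : Set L :=
  P.foldl gammaL s

/- auxiliary -/
def delList {L : Type*} (l : List (Action L)) : Set L := ⋃ a ∈ l, a.del
def addList {L : Type*} (l : List (Action L)) : Set L := ⋃ a ∈ l, a.add

lemma delList_cons {L : Type*} (a : Action L) (l : List (Action L)) :
    delList (a :: l) = a.del ∪ delList l := by
  simp [delList]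

lemma addList_cons {L : Type*} (a : Action L) (l : List (Action L)) :
    addList (a :: l) = a.add ∪ addList l := by
  simp [addList]

lemma diff_subset_foldl {L : Type*} (l : List (Action L)) (s : Set L) :
    s \ delList l ⊆ l.foldl gamma s := by
  induction l generalizing s with
  | nil => simp [delList]
  | cons a l ih =>
    intro x hx
    rw [delList_cons] at hx
    simp only [List.foldl_cons]
    exact ih (gamma s a) ⟨Or.inl ⟨hx.1, fun h => hx.2 (Or.inl h)⟩, fun h => hx.2 (Or.inr h)⟩

lemma foldl_eq_layer {L : Type*} (l : List (Action L)) (s : Set L)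
    (hp : l.Pairwise Indep) :
    l.foldl gamma s = (s \ delList l) ∪ addList l := by
  induction l generalizing s with
  | nil => simp [delList, addList]
  | cons a l ih =>
    rw [List.pairwise_cons] at hp
    simp only [List.foldl_cons]
    rw [ih _ hp.2, delList_cons, addList_cons]
    have hdisj : ∀ b ∈ l, b.del ∩ a.add = ∅ := by
      intro b hb
      have := (hp.1 b hb).2
      rw [Set.eq_empty_iff_forall_notMem] at this ⊢
      intro x hx; exact this x ⟨hx.1, Or.inr hx.2⟩
    ext x
    simp only [gamma, Set.mem_union, Set.mem_diff]
    constructor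
    · rintro (⟨(⟨hs, hda⟩ | hadd), hdl⟩ | hal)
      · exact Or.inl ⟨hs, fun h => h.elim hda hdl⟩
      · exact Or.inr (Or.inl hadd)
      · exact Or.inr (Or.inr hal)
    · rintro (⟨hs, hd⟩ | hadd | hal)
      · exact Or.inl ⟨Or.inl ⟨hs, fun h => hd (Or.inl h)⟩, fun h => hd (Or.inr h)⟩
      · refine Or.inl ⟨Or.inr hadd, ?_⟩
        intro hx
        rw [delList] at hx
        simp only [Set.mem_iUnion] at hx
        obtain ⟨b, hb, hbd⟩ := hx
        have := hdisj b hb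
        rw [Set.eq_empty_iff_forall_notMem] at this
        exact this x ⟨hbd, hadd⟩
      · exact Or.inr hal

lemma lin_pairwise {L : Type*} {π : Set (Action L)} {l : List (Action L)}
    (hpi : PairwiseIndep π) (hl : Linearization π l) : l.Pairwise Indep := by
  have := hl.1
  rw [List.Nodup] at this
  exact this.imp_of_mem (fun {a b} ha hb hne =>
    hpi a ((hl.2 a).1 ha) b ((hl.2 b).1 hb) hne)

lemma lin_del {L : Type*} {π : Set (Action L)} {l : List (Action L)}
    (hl : Linearization π l) : delList l = delL π := by
  unfold delList delL
  ext x; simp only [Set.mem_iUnion]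
  constructor
  · rintro ⟨a, ha, h⟩; exact ⟨a, (hl.2 a).1 ha, h⟩
  · rintro ⟨a, ha, h⟩; exact ⟨a, (hl.2 a).2 ha, h⟩

lemma lin_add {L : Type*} {π : Set (Action L)} {l : List (Action L)}
    (hl : Linearization π l) : addList l = addL π := by
  unfold addList addL
  ext x; simp only [Set.mem_iUnion]
  constructor
  · rintro ⟨a, ha, h⟩; exact ⟨a, (hl.2 a).1 ha, h⟩
  · rintro ⟨a, ha, h⟩; exact ⟨a, (hl.2 a).2 ha, h⟩

lemma foldl_lin {L : Type*} {π : Set (Action L)} {l : List (Action L)} (s : Set L)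
    (hpi : PairwiseIndep π) (hl : Linearization π l) :
    l.foldl gamma s = gammaL s π := by
  rw [foldl_eq_layer l s (lin_pairwise hpi hl), lin_del hl, lin_add hl, gammaL]

lemma seq_app {L : Type*} {l l₁ l₂ : List (Action L)} {a : Action L} (s : Set L)
    (hp : l.Pairwise Indep) (hpre : ∀ b ∈ l, b.pre ⊆ s)
    (hsplit : l = l₁ ++ a :: l₂) : a.pre ⊆ l₁.foldl gamma s := by
  subst hsplit
  rw [List.pairwise_append] at hp
  have has : a.pre ⊆ s := hpre a (by simp)
  have hd : a.pre ∩ delList l₁ = ∅ := by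
    rw [Set.eq_empty_iff_forall_notMem]
    rintro x ⟨hxa, hxd⟩
    rw [delList] at hxd
    simp only [Set.mem_iUnion] at hxd
    obtain ⟨b, hb, hbd⟩ := hxd
    have := (hp.2.2 b hb a (by simp)).1
    rw [Set.eq_empty_iff_forall_notMem] at this
    exact this x ⟨hbd, Or.inl hxa⟩
  intro x hx
  apply diff_subset_foldl
  refine ⟨has hx, fun h => ?_⟩
  rw [Set.eq_empty_iff_forall_notMem] at hd
  exact hd x ⟨hx, h⟩


/-- Let `Π = ⟨π₁, …, πₙ⟩` be a layered plan (each `πᵢ` a finite set of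
pairwise independent actions) applicable from the initial state `I`, and
let `G ⊆ γ(I, Π)` be a goal. Then for every choice of linearizations `lᵢ`
of the layers `πᵢ`, the sequential plan `l₁ ++ ⋯ ++ lₙ` is a solution of
the STRIPS problem: each action is applicable in the state at which it is
executed, and the final state obtained by sequential execution from `I`
contains `G`. -/
theorem join_linearizations_solution {L : Type*} (I : Set L)
    (P : List (Set (Action L)))
    (hfin : ∀ π ∈ P, Set.Finite π)
    (hind : ∀ π ∈ P, PairwiseIndep π)
    (happ : ∀ (i : ℕ) (h : i < P.length),
      preL (P.get ⟨i, h⟩) ⊆ gammaP I (P.take i))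
    (G : Set L) (hgoal : G ⊆ gammaP I P)
    (ls : List (List (Action L))) (hlen : ls.length = P.length)
    (hlin : ∀ (i : ℕ) (h : i < P.length),
      Linearization (P.get ⟨i, h⟩) (ls.get ⟨i, by omega⟩)) :
    (∀ (l₁ : List (Action L)) (a : Action L) (l₂ : List (Action L)),
        ls.flatten = l₁ ++ a :: l₂ → a.pre ⊆ l₁.foldl gamma I) ∧
    G ⊆ ls.flatten.foldl gamma I := by
  induction P generalizing I ls G with
  | nil =>
    have : ls = [] := List.length_eq_zero_iff.mp (by simpa using hlen)
    subst this
    refine ⟨fun l₁ a l₂ h => absurd h (by simp), ?_⟩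
    simpa [gammaP] using hgoal
  | cons π P' ih =>
    obtain ⟨l, ls', rfl⟩ : ∃ l ls', ls = l :: ls' := by
      cases ls with
      | nil => simp at hlen
      | cons l ls' => exact ⟨l, ls', rfl⟩
    have hlen' : ls'.length = P'.length := by simpa using hlen
    have hlin0 : Linearization π l := hlin 0 (by simp)
    have hpi : PairwiseIndep π := hind π (by simp)
    have hstate : l.foldl gamma I = gammaL I π := foldl_lin I hpi hlin0
    have hpre0 : ∀ b ∈ l, b.pre ⊆ I := by
      intro b hb x hx
      have h0 := happ 0 (by simp)
      simp only [List.get_eq_getElem, List.getElem_cons_zero, List.take_zero] at h0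
      apply h0
      rw [preL]
      simp only [Set.mem_iUnion]
      exact ⟨b, (hlin0.2 b).1 hb, hx⟩
    have hgp : ∀ Q, gammaP I (π :: Q) = gammaP (gammaL I π) Q := by
      intro Q; simp [gammaP]
    have ihres := ih (gammaL I π) (fun σ hσ => hfin σ (by simp [hσ]))
      (fun σ hσ => hind σ (by simp [hσ]))
      (fun i h => by
        have := happ (i + 1) (by simpa using Nat.succ_lt_succ h)
        simpa [hgp, List.take_succ_cons] using this)
      G (by rwa [hgp] at hgoal)
      ls' hlen'
      (fun i h => by
        have := hlin (i + 1) (by simpa using Nat.succ_lt_succ h)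
        simpa using this)
    constructor
    · intro l₁ a l₂ hsplit
      simp only [List.flatten_cons] at hsplit
      rcases List.append_eq_append_iff.mp hsplit with ⟨w, hw1, hw2⟩ | ⟨w, hw1, hw2⟩
      · -- l₁ = l ++ w, ls'.flatten = w ++ a :: l₂
        subst hw1
        rw [List.foldl_append, hstate]
        exact ihres.1 w a l₂ hw2
      · -- l = l₁ ++ w, a :: l₂ = w ++ ls'.flatten
        cases w with
        | nil =>
          simp only [List.append_nil] at hw1
          subst hw1
          rw [hstate]
          have : ls'.flatten = [] ++ a :: l₂ := by simpa using hw2.symm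
          exact ihres.1 [] a l₂ this
        | cons b w' =>
          have hab : a = b ∧ l₂ = w' ++ ls'.flatten := by
            simpa using hw2
          obtain ⟨rfl, -⟩ := hab
          exact seq_app I (lin_pairwise hpi hlin0) hpre0 hw1
    · intro x hx
      have := ihres.2 hx
      simpa [List.flatten_cons, List.foldl_append, hstate] using this


end STRIPS
end
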